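/- Fix n ∈ ℕ, r ∈ ℕ, a positive definite quadratic form g on ℝ^d with |j|_g² := g(j,j), and γ > 0. Let μ be the product over j ∈ ℤ^d of the uniform probability measures on [−1/2, 1/2], a probability measure on A := [−1/2,1/2]^{ℤ^d}, and for a ∈ A define ω_j(a) := |j|_g² + a_j (1+|j|)^{−n}. For N ≥ 1 let ℤ^d_N := {j ∈ ℤ^d : |j| ≤ N}, and let k : ℤ^d_N → ℤ with 0 < Σ_{j∈ℤ^d_N} |k_j| ≤ r. Then μ{ a ∈ A : |Σ_{j∈ℤ^d_N} k_j ω_j(a)| < γ } ≤ 2γ(1+N)^n. -/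

import Mathlib

/-!
Under `μ` the coordinates `a_j` are independent and uniform on `[-1/2, 1/2]`. Pick `j₀` with
`k_{j₀} ≠ 0`: the sum is `X + t a_{j₀}` with `X` independent of `a_{j₀}` and
`|t| = |k_{j₀}| (1 + |j₀|)^{-n} ≥ (1 + N)^{-n}`. For each value of `X` the condition confines
`a_{j₀}` to an interval of length `2γ / |t| ≤ 2γ (1 + N)^n`, and the uniform law gives it at most
that mass.
-/

open scoped BigOperators
open MeasureTheory

namespace AG

abbrev Zd (d : ℕ) := Fin d → ℤ

noncomputable def enorm {d : ℕ} (j : Zd d) : ℝ := Real.sqrt (∑ i, ((j i : ℝ))^2)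

/-- `|j|_g² = g(j,j)` for a quadratic form with coefficients `g`. -/
noncomputable def qform (d : ℕ) (g : Fin d → Fin d → ℝ) (j : Zd d) : ℝ :=
  ∑ i, ∑ k, g i k * (j i : ℝ) * (j k : ℝ)

/-- `μ` is the product over `j ∈ ℤ^d` of the uniform probability measures on
`[−1/2,1/2]`: on every finite cylinder it is given by the product of the uniform
measures of the factors. -/
def IsCylinderUniform (d : ℕ) (μ : Measure (Zd d → ℝ)) : Prop :=
  ∀ (S : Finset (Zd d)) (t : Zd d → Set ℝ), (∀ j, MeasurableSet (t j)) →
    μ {a | ∀ j ∈ S, a j ∈ t j} =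
      ∏ j ∈ S, volume (t j ∩ Set.Icc (-(1 : ℝ) / 2) (1 / 2))

/-- The NLS frequencies `ω_j(a) = |j|_g² + a_j (1+|j|)^{−n}`. -/
noncomputable def nlsFreq (d n : ℕ) (g : Fin d → Fin d → ℝ) (a : Zd d → ℝ)
    (j : Zd d) : ℝ :=
  qform d g j + a j * (1 + enorm j) ^ (-(n : ℝ))

open ProbabilityTheory Set
open scoped ENNReal

theorem measure_abs_add_lt_le_of_indepFun {Ω : Type*} [MeasurableSpace Ω] {μ : Measure Ω}
    [IsProbabilityMeasure μ] {X Y : Ω → ℝ} (hX : Measurable X) (hY : Measurable Y)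
    (hXY : X ⟂ᵢ[μ] Y) {ρ : ℝ} {ε : ℝ≥0∞} (hε : ∀ x, μ {ω | |Y ω - x| < ρ} ≤ ε) :
    μ {ω | |X ω + Y ω| < ρ} ≤ ε := by
  have hB : MeasurableSet {p : ℝ × ℝ | |p.1 + p.2| < ρ} :=
    measurableSet_lt (by fun_prop) measurable_const
  have hslice : ∀ x, μ.map Y (Prod.mk x ⁻¹' {p : ℝ × ℝ | |p.1 + p.2| < ρ}) ≤ ε := fun x => by
    rw [Measure.map_apply hY (measurable_prodMk_left hB)]
    convert hε (-x) using 3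
    simp [add_comm]
  have := Measure.isProbabilityMeasure_map (μ := μ) hX.aemeasurable
  calc μ {ω | |X ω + Y ω| < ρ}
      = μ.map (fun ω => (X ω, Y ω)) {p | |p.1 + p.2| < ρ} :=
        (Measure.map_apply (hX.prodMk hY) hB).symm
    _ = ∫⁻ x, μ.map Y (Prod.mk x ⁻¹' {p : ℝ × ℝ | |p.1 + p.2| < ρ}) ∂μ.map X := by
        rw [hXY.map_prod_eq_prod_map_map hX.aemeasurable hY.aemeasurable,
          Measure.prod_apply hB]
    _ ≤ ∫⁻ _, ε ∂μ.map X := lintegral_mono hslice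
    _ = ε := by simp

namespace IsCylinderUniform

variable {d : ℕ} {μ : Measure (Zd d → ℝ)}

theorem isProbabilityMeasure (hμ : IsCylinderUniform d μ) : IsProbabilityMeasure μ :=
  ⟨by simpa using hμ ∅ (fun _ => univ) fun _ => MeasurableSet.univ⟩

theorem measure_eval_mem (hμ : IsCylinderUniform d μ) (j : Zd d) {s : Set ℝ}
    (hs : MeasurableSet s) : μ {a | a j ∈ s} = volume (s ∩ Icc (-(1 : ℝ) / 2) (1 / 2)) := by
  simpa using hμ {j} (fun _ => s) fun _ => hs

theorem iIndepFun_eval (hμ : IsCylinderUniform d μ) :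
    iIndepFun (fun j (a : Zd d → ℝ) => a j) μ := by
  classical
  rw [iIndepFun_iff_measure_inter_preimage_eq_mul]
  intro S sets hsets
  have hcyl := hμ S (fun j => if j ∈ S then sets j else univ) fun j => by
    split_ifs with hj
    exacts [hsets j hj, MeasurableSet.univ]
  convert hcyl using 1
  · congr 1
    ext a
    simp +contextual
  · refine Finset.prod_congr rfl fun j hj => ?_
    rw [if_pos hj, ← hμ.measure_eval_mem j (hsets j hj)]
    rfl

theorem measure_abs_mul_eval_sub_lt_le (hμ : IsCylinderUniform d μ) (j : Zd d) {t : ℝ}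
    (ht : t ≠ 0) (x γ : ℝ) :
    μ {a | |t * a j - x| < γ} ≤ ENNReal.ofReal (2 * γ / |t|) := by
  have hball :
      {a : Zd d → ℝ | |t * a j - x| < γ} = {a | a j ∈ Metric.ball (x / t) (γ / |t|)} := by
    ext a
    rw [mem_ofPred_eq, mem_ofPred_eq, Metric.mem_ball, Real.dist_eq,
      lt_div_iff₀ (abs_pos.mpr ht), ← abs_mul, sub_mul, div_mul_cancel₀ x ht, mul_comm]
  calc μ {a | |t * a j - x| < γ}
      = volume (Metric.ball (x / t) (γ / |t|) ∩ Icc (-(1 : ℝ) / 2) (1 / 2)) := by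
        rw [hball, hμ.measure_eval_mem j measurableSet_ball]
    _ ≤ volume (Metric.ball (x / t) (γ / |t|)) := measure_mono inter_subset_left
    _ = ENNReal.ofReal (2 * γ / |t|) := by rw [Real.volume_ball, mul_div_assoc]

theorem iIndepFun_mul_nlsFreq (hμ : IsCylinderUniform d μ) (n : ℕ) (g : Fin d → Fin d → ℝ)
    (k : Zd d → ℝ) : iIndepFun (fun j a => k j * nlsFreq d n g a j) μ :=
  hμ.iIndepFun_eval.comp (fun j u => k j * (qform d g j + u * (1 + enorm j) ^ (-(n : ℝ))))
    fun _ => by fun_prop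

end IsCylinderUniform

theorem one_add_enorm_pos {d : ℕ} (j : Zd d) : 0 < 1 + enorm j := by
  unfold enorm
  positivity

theorem abs_intCast_mul_rpow_neg_inv_le {d : ℕ} (n N : ℕ) {m : ℤ} (hm : m ≠ 0) {j : Zd d}
    (hj : enorm j ≤ N) : |(m : ℝ) * (1 + enorm j) ^ (-(n : ℝ))|⁻¹ ≤ (1 + N) ^ n := by
  have hpos := one_add_enorm_pos j
  have hm1 : (1 : ℝ) ≤ |(m : ℝ)| := by exact_mod_cast Int.one_le_abs hm
  rw [abs_mul, abs_of_pos (Real.rpow_pos_of_pos hpos _), Real.rpow_neg hpos.le,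
    Real.rpow_natCast, mul_inv, inv_inv]
  calc |(m : ℝ)|⁻¹ * (1 + enorm j) ^ n ≤ 1 * (1 + N) ^ n := by
        gcongr
        exact inv_le_one_of_one_le₀ hm1
    _ = (1 + N) ^ n := one_mul _

theorem IsCylinderUniform.measure_abs_intCast_mul_nlsFreq_sub_lt_le {d : ℕ}
    {μ : Measure (Zd d → ℝ)} (hμ : IsCylinderUniform d μ) (n : ℕ) (g : Fin d → Fin d → ℝ)
    {N : ℕ} {m : ℤ} (hm : m ≠ 0) {j : Zd d} (hj : enorm j ≤ N) (x : ℝ) {γ : ℝ} (hγ : 0 ≤ γ) :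
    μ {a | |m * nlsFreq d n g a j - x| < γ} ≤ ENNReal.ofReal (2 * γ * (1 + (N : ℝ)) ^ n) := by
  set t : ℝ := m * (1 + enorm j) ^ (-(n : ℝ))
  have ht : t ≠ 0 :=
    mul_ne_zero (Int.cast_ne_zero.mpr hm) (Real.rpow_pos_of_pos (one_add_enorm_pos j) _).ne'
  calc μ {a | |m * nlsFreq d n g a j - x| < γ}
      = μ {a | |t * a j - (x - m * qform d g j)| < γ} := by
        congr with a
        simp only [t, nlsFreq]
        ring_nf
    _ ≤ ENNReal.ofReal (2 * γ / |t|) := hμ.measure_abs_mul_eval_sub_lt_le j ht _ _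
    _ ≤ ENNReal.ofReal (2 * γ * (1 + (N : ℝ)) ^ n) := by
        rw [div_eq_mul_inv]
        gcongr
        exact abs_intCast_mul_rpow_neg_inv_le n N hm hj

theorem stmt_11_general (d : ℕ) (n : ℕ)
    (g : Fin d → Fin d → ℝ)
    (γ : ℝ) (hγ : 0 < γ)
    (μ : Measure (Zd d → ℝ)) (hμ : IsCylinderUniform d μ)
    (N : ℕ) (k : Zd d → ℤ)
    (hksupp : ∀ j, k j ≠ 0 → enorm j ≤ N)
    (hkfin : (Function.support k).Finite)
    (hkpos : 0 < ∑ᶠ j, (k j).natAbs) :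
    μ {a : Zd d → ℝ | |∑ᶠ j : Zd d, (k j : ℝ) * nlsFreq d n g a j| < γ}
      ≤ ENNReal.ofReal (2 * γ * (1 + (N : ℝ)) ^ n) := by
  classical
  have := hμ.isProbabilityMeasure
  obtain ⟨j₀, hj₀⟩ : ∃ j, k j ≠ 0 := by
    obtain ⟨j, hj⟩ := not_forall.mp (mt finsum_eq_zero_of_forall_eq_zero hkpos.ne')
    exact ⟨j, Int.natAbs_ne_zero.mp hj⟩
  set S := hkfin.toFinset
  set X : Zd d → (Zd d → ℝ) → ℝ := fun j a => k j * nlsFreq d n g a j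
  have hX : ∀ j, Measurable (X j) := fun j => by unfold X nlsFreq; fun_prop
  have hsum : ∀ a, ∑ᶠ j, X j a = (∑ j ∈ S.erase j₀, X j) a + X j₀ a := fun a => by
    have hsupp : (Function.support fun j => X j a) ⊆ S := fun j hj =>
      hkfin.mem_toFinset.mpr (Int.cast_ne_zero.mp (left_ne_zero_of_mul hj))
    rw [finsum_eq_sum_of_support_subset _ hsupp, Finset.sum_apply,
      Finset.sum_erase_add _ _ (hkfin.mem_toFinset.mpr hj₀)]
  change μ {a | |∑ᶠ j, X j a| < γ} ≤ _
  simp_rw [hsum]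
  exact measure_abs_add_lt_le_of_indepFun
    (Finset.sum_fn _ X ▸ Finset.measurable_sum _ fun j _ => hX j) (hX j₀)
    ((hμ.iIndepFun_mul_nlsFreq n g _).indepFun_finsetSum_of_notMem hX (S.notMem_erase j₀))
    fun x => hμ.measure_abs_intCast_mul_nlsFreq_sub_lt_le n g hj₀ (hksupp j₀ hj₀) x hγ.le

/-- Lemma `meas.nls`.
For a nonzero integer vector `k` supported on `|j| ≤ N` with `Σ|k_j| ≤ r`, the set of
potentials `a` with `|Σ k_j ω_j(a)| < γ` has product-uniform measure `≤ 2γ(1+N)^n`. -/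
theorem stmt_11 (d : ℕ) (hd : 1 ≤ d) (n r : ℕ)
    (g : Fin d → Fin d → ℝ) (hsym : ∀ i k, g i k = g k i)
    (hpos : ∀ x : Fin d → ℝ, x ≠ 0 → 0 < ∑ i, ∑ k, g i k * x i * x k)
    (γ : ℝ) (hγ : 0 < γ)
    (μ : Measure (Zd d → ℝ)) (hμ : IsCylinderUniform d μ)
    (N : ℕ) (hN : 1 ≤ N) (k : Zd d → ℤ)
    (hksupp : ∀ j, k j ≠ 0 → enorm j ≤ N)
    (hkfin : (Function.support k).Finite)
    (hkpos : 0 < ∑ᶠ j, (k j).natAbs) (hkr : ∑ᶠ j, (k j).natAbs ≤ r) :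
    μ {a : Zd d → ℝ | |∑ᶠ j : Zd d, (k j : ℝ) * nlsFreq d n g a j| < γ}
      ≤ ENNReal.ofReal (2 * γ * (1 + (N : ℝ)) ^ n) :=
  stmt_11_general d n g γ hγ μ hμ N k hksupp hkfin hkpos

end AG
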